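/- Let d ≥ 1 and define the BHEP kernel at the standardized parameter λ = (0, I_d) by h(x,y) = exp(-‖x-y‖²/2) - 2^{-d/2} exp(-‖x‖²/4) - 2^{-d/2} exp(-‖y‖²/4) + 3^{-d/2}. Then for every y ∈ ℝ^d, ∫_{ℝ^d} h(x,y) φ(x) dx = 0; that is, the kernel h is degenerate with respect to the standard d-variate normal distribution. -/

import Mathlib

open MeasureTheory Real

/-- Density of the `d`-variate standard normal distribution,
`φ(x) = (2π)^{-d/2} exp(-‖x‖²/2)`, with `‖x‖² = ∑ i, x i ^ 2`. -/
noncomputable def gaussDensity (d : ℕ) (x : Fin d → ℝ) : ℝ :=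
  (2 * π) ^ (-(d : ℝ) / 2) * Real.exp (-(∑ i, x i ^ 2) / 2)

/-- The BHEP kernel at the standardized parameter `λ = (0, I_d)`:
`h(x,y) = exp(-‖x-y‖²/2) - 2^{-d/2} exp(-‖x‖²/4) - 2^{-d/2} exp(-‖y‖²/4) + 3^{-d/2}`. -/
noncomputable def bhepKernel (d : ℕ) (x y : Fin d → ℝ) : ℝ :=
  Real.exp (-(∑ i, (x i - y i) ^ 2) / 2)
    - (2 : ℝ) ^ (-(d : ℝ) / 2) * Real.exp (-(∑ i, x i ^ 2) / 4)
    - (2 : ℝ) ^ (-(d : ℝ) / 2) * Real.exp (-(∑ i, y i ^ 2) / 4)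
    + (3 : ℝ) ^ (-(d : ℝ) / 2)

lemma int_shift (c : ℝ) :
    ∫ x : ℝ, Real.exp (-((x - c) ^ 2 + x ^ 2) / 2) = Real.sqrt π * Real.exp (-c ^ 2 / 4) := by
  have h : ∀ x : ℝ, -((x - c) ^ 2 + x ^ 2) / 2 = -(1 : ℝ) * (x - c / 2) ^ 2 + (-c ^ 2 / 4) :=
    fun x => by ring
  simp_rw [h, Real.exp_add, integral_mul_const]
  congr 1
  rw [show (fun x : ℝ => Real.exp (-1 * (x - c / 2) ^ 2))
      = (fun x : ℝ => Real.exp (-1 * x ^ 2)) ∘ (fun x => x - c / 2) from rfl]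
  rw [Function.comp_def, integral_sub_right_eq_self (fun x : ℝ => Real.exp (-1 * x ^ 2)) (c / 2)]
  rw [integral_gaussian]
  norm_num

lemma integ_shift (c : ℝ) :
    Integrable (fun x : ℝ => Real.exp (-((x - c) ^ 2 + x ^ 2) / 2)) := by
  have h : ∀ x : ℝ, -((x - c) ^ 2 + x ^ 2) / 2 = -(1 : ℝ) * (x - c / 2) ^ 2 + (-c ^ 2 / 4) :=
    fun x => by ring
  simp_rw [h, Real.exp_add]
  exact ((integrable_exp_neg_mul_sq one_pos).comp_sub_right (c / 2)).mul_const _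

lemma aux_pow (d : ℕ) (u : ℝ) (hu : 0 ≤ u) : u ^ (-(d:ℝ)/2) = (u ^ (-(1:ℝ)/2)) ^ d := by
  rw [← Real.rpow_natCast (u ^ (-(1:ℝ)/2)) d, ← Real.rpow_mul hu]
  ring_nf

lemma const_A : ((2 * π : ℝ)) ^ (-(1:ℝ)/2) * Real.sqrt π = (2:ℝ) ^ (-(1:ℝ)/2) := by
  rw [Real.sqrt_eq_rpow, Real.mul_rpow (by norm_num) pi_pos.le,
    mul_assoc, ← Real.rpow_add pi_pos]
  norm_num

lemma const_B : ((2 * π : ℝ)) ^ (-(1:ℝ)/2) * Real.sqrt (π / (3/4)) = ((2:ℝ)/3) ^ ((1:ℝ)/2) := by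
  rw [Real.sqrt_eq_rpow, Real.mul_rpow (by norm_num) pi_pos.le,
    div_eq_mul_inv π, Real.mul_rpow pi_pos.le (by norm_num)]
  rw [show ((2:ℝ)^(-(1:ℝ)/2) * π ^ (-(1:ℝ)/2)) * (π ^ ((1:ℝ)/2) * ((3:ℝ)/4)⁻¹ ^ ((1:ℝ)/2))
      = (π ^ (-(1:ℝ)/2) * π ^ ((1:ℝ)/2)) * ((2:ℝ)^(-(1:ℝ)/2) * ((3:ℝ)/4)⁻¹ ^ ((1:ℝ)/2)) by ring]
  rw [← Real.rpow_add pi_pos]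
  rw [show ((3:ℝ)/4)⁻¹ = (2:ℝ) * (2/3) by norm_num,
    Real.mul_rpow two_pos.le (by norm_num),
    show (2:ℝ)^(-(1:ℝ)/2) * ((2:ℝ)^((1:ℝ)/2) * ((2:ℝ)/3)^((1:ℝ)/2))
      = ((2:ℝ)^(-(1:ℝ)/2) * (2:ℝ)^((1:ℝ)/2)) * ((2:ℝ)/3)^((1:ℝ)/2) by ring,
    ← Real.rpow_add two_pos]
  norm_num

lemma const_BB : (2:ℝ) ^ (-(1:ℝ)/2) * ((2:ℝ)/3) ^ ((1:ℝ)/2) = (3:ℝ) ^ (-(1:ℝ)/2) := by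
  rw [show ((2:ℝ)/3) = 2 * 3⁻¹ by norm_num,
    Real.mul_rpow two_pos.le (by norm_num), ← mul_assoc,
    ← Real.rpow_add two_pos, Real.inv_rpow (by norm_num : (0:ℝ) ≤ 3),
    ← Real.rpow_neg (by norm_num : (0:ℝ) ≤ 3)]
  norm_num

lemma const_G : ((2 * π : ℝ)) ^ (-(1:ℝ)/2) * Real.sqrt (π / (1/2)) = 1 := by
  rw [show π / (1/2:ℝ) = 2 * π by ring, Real.sqrt_eq_rpow, ← Real.rpow_add (by positivity)]
  norm_num

/-- For every `d ≥ 1` and every `y ∈ ℝ^d`, `∫ h(x,y) φ(x) dx = 0`: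
the BHEP kernel is degenerate with respect to the standard `d`-variate normal law. -/
theorem bhep_kernel_degenerate (d : ℕ) (hd : 1 ≤ d) (y : Fin d → ℝ) :
    (∫ x : Fin d → ℝ, bhepKernel d x y * gaussDensity d x) = 0 := by
  have hcpos : (0:ℝ) < 2 * π := by positivity
  -- product forms
  have hA : ∀ x : Fin d → ℝ, Real.exp (-(∑ i, (x i - y i) ^ 2) / 2) * gaussDensity d x
      = ∏ i, ((2 * π) ^ (-(1:ℝ)/2) * Real.exp (-((x i - y i) ^ 2 + x i ^ 2) / 2)) := by
    intro x
    rw [gaussDensity, Finset.prod_mul_distrib, Finset.prod_const, Finset.card_univ,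
      Fintype.card_fin, ← Real.exp_sum, ← aux_pow d _ hcpos.le]
    rw [show (∑ i, -((x i - y i) ^ 2 + x i ^ 2) / 2)
        = -(∑ i, (x i - y i) ^ 2) / 2 + -(∑ i, x i ^ 2) / 2 by
      simp only [neg_div, neg_add, Finset.sum_div, ← Finset.sum_neg_distrib,
        ← Finset.sum_add_distrib]
      exact Finset.sum_congr rfl fun i _ => by ring]
    rw [Real.exp_add]; ring
  have hB : ∀ x : Fin d → ℝ, Real.exp (-(∑ i, x i ^ 2) / 4) * gaussDensity d x
      = ∏ i, ((2 * π) ^ (-(1:ℝ)/2) * Real.exp (-(3/4) * x i ^ 2)) := by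
    intro x
    rw [gaussDensity, Finset.prod_mul_distrib, Finset.prod_const, Finset.card_univ,
      Fintype.card_fin, ← Real.exp_sum, ← aux_pow d _ hcpos.le]
    rw [show (∑ i, -(3/4 : ℝ) * x i ^ 2) = -(∑ i, x i ^ 2) / 4 + -(∑ i, x i ^ 2) / 2 by
      rw [← Finset.mul_sum]; ring]
    rw [Real.exp_add]; ring
  have hG : ∀ x : Fin d → ℝ, gaussDensity d x
      = ∏ i, ((2 * π) ^ (-(1:ℝ)/2) * Real.exp (-(1/2) * x i ^ 2)) := by
    intro x
    rw [gaussDensity, Finset.prod_mul_distrib, Finset.prod_const, Finset.card_univ,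
      Fintype.card_fin, ← Real.exp_sum, ← aux_pow d _ hcpos.le]
    rw [show (∑ i, -(1/2 : ℝ) * x i ^ 2) = -(∑ i, x i ^ 2) / 2 by
      rw [← Finset.mul_sum]; ring]
  -- integrabilities
  have iA : Integrable (fun x : Fin d → ℝ =>
      Real.exp (-(∑ i, (x i - y i) ^ 2) / 2) * gaussDensity d x) := by
    simp_rw [hA]
    exact Integrable.fintype_prod (f := fun i (s : ℝ) =>
        (2 * π) ^ (-(1:ℝ)/2) * Real.exp (-((s - y i) ^ 2 + s ^ 2) / 2))
      (fun i => (integ_shift (y i)).const_mul _)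
  have iB : Integrable (fun x : Fin d → ℝ =>
      Real.exp (-(∑ i, x i ^ 2) / 4) * gaussDensity d x) := by
    simp_rw [hB]
    exact Integrable.fintype_prod (f := fun _ (s : ℝ) =>
        (2 * π) ^ (-(1:ℝ)/2) * Real.exp (-(3/4) * s ^ 2))
      (fun i => (integrable_exp_neg_mul_sq (by norm_num)).const_mul _)
  have iG : Integrable (fun x : Fin d → ℝ => gaussDensity d x) := by
    simp_rw [hG]
    exact Integrable.fintype_prod (f := fun _ (s : ℝ) =>
        (2 * π) ^ (-(1:ℝ)/2) * Real.exp (-(1/2) * s ^ 2))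
      (fun i => (integrable_exp_neg_mul_sq (by norm_num)).const_mul _)
  -- values
  have vA : (∫ x : Fin d → ℝ, Real.exp (-(∑ i, (x i - y i) ^ 2) / 2) * gaussDensity d x)
      = (2:ℝ) ^ (-(d:ℝ)/2) * Real.exp (-(∑ i, y i ^ 2) / 4) := by
    simp_rw [hA]
    rw [integral_fintype_prod_volume_eq_prod (fun i (s : ℝ) =>
      (2 * π) ^ (-(1:ℝ)/2) * Real.exp (-((s - y i) ^ 2 + s ^ 2) / 2))]
    simp_rw [integral_const_mul, int_shift, ← mul_assoc]
    rw [Finset.prod_mul_distrib, Finset.prod_const, Finset.card_univ, Fintype.card_fin,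
      const_A, ← Real.exp_sum, ← aux_pow d 2 (by norm_num)]
    congr 1
    simp only [neg_div, Finset.sum_div, ← Finset.sum_neg_distrib]
  have vB : (∫ x : Fin d → ℝ, Real.exp (-(∑ i, x i ^ 2) / 4) * gaussDensity d x)
      = (((2:ℝ)/3) ^ ((1:ℝ)/2)) ^ d := by
    simp_rw [hB]
    rw [integral_fintype_prod_volume_eq_prod (fun _ (s : ℝ) =>
      (2 * π) ^ (-(1:ℝ)/2) * Real.exp (-(3/4) * s ^ 2))]
    simp_rw [integral_const_mul, integral_gaussian]
    rw [Finset.prod_const, Finset.card_univ, Fintype.card_fin, const_B]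
  have vG : (∫ x : Fin d → ℝ, gaussDensity d x) = 1 := by
    simp_rw [hG]
    rw [integral_fintype_prod_volume_eq_prod (fun _ (s : ℝ) =>
      (2 * π) ^ (-(1:ℝ)/2) * Real.exp (-(1/2) * s ^ 2))]
    simp_rw [integral_const_mul, integral_gaussian]
    rw [Finset.prod_const, Finset.card_univ, Fintype.card_fin, const_G, one_pow]
  -- split the integral
  have key : ∀ x : Fin d → ℝ, bhepKernel d x y * gaussDensity d x =
      (Real.exp (-(∑ i, (x i - y i) ^ 2) / 2) * gaussDensity d x)
      - (2:ℝ) ^ (-(d:ℝ)/2) * (Real.exp (-(∑ i, x i ^ 2) / 4) * gaussDensity d x)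
      - ((2:ℝ) ^ (-(d:ℝ)/2) * Real.exp (-(∑ i, y i ^ 2) / 4)) * gaussDensity d x
      + (3:ℝ) ^ (-(d:ℝ)/2) * gaussDensity d x := by
    intro x; rw [bhepKernel]; ring
  simp_rw [key]
  have I2 : Integrable (fun x : Fin d → ℝ =>
      (2:ℝ) ^ (-(d:ℝ)/2) * (Real.exp (-(∑ i, x i ^ 2) / 4) * gaussDensity d x)) :=
    iB.const_mul _
  have I3 : Integrable (fun x : Fin d → ℝ =>
      Real.exp (-(∑ i, (x i - y i) ^ 2) / 2) * gaussDensity d x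
      - (2:ℝ) ^ (-(d:ℝ)/2) * (Real.exp (-(∑ i, x i ^ 2) / 4) * gaussDensity d x)) :=
    iA.sub I2
  have I2' : Integrable (fun x : Fin d → ℝ =>
      ((2:ℝ) ^ (-(d:ℝ)/2) * Real.exp (-(∑ i, y i ^ 2) / 4)) * gaussDensity d x) :=
    iG.const_mul _
  have I4 : Integrable (fun x : Fin d → ℝ =>
      Real.exp (-(∑ i, (x i - y i) ^ 2) / 2) * gaussDensity d x
      - (2:ℝ) ^ (-(d:ℝ)/2) * (Real.exp (-(∑ i, x i ^ 2) / 4) * gaussDensity d x)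
      - ((2:ℝ) ^ (-(d:ℝ)/2) * Real.exp (-(∑ i, y i ^ 2) / 4)) * gaussDensity d x) :=
    I3.sub I2'
  have I5 : Integrable (fun x : Fin d → ℝ =>
      (3:ℝ) ^ (-(d:ℝ)/2) * gaussDensity d x) := iG.const_mul _
  rw [integral_add I4 I5, integral_sub I3 I2', integral_sub iA I2,
    integral_const_mul, integral_const_mul, integral_const_mul, vA, vB, vG]
  have h1 : (2:ℝ) ^ (-(d:ℝ)/2) * (((2:ℝ)/3) ^ ((1:ℝ)/2)) ^ d = (3:ℝ) ^ (-(d:ℝ)/2) := by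
    rw [aux_pow d 2 (by norm_num), aux_pow d 3 (by norm_num), ← mul_pow, const_BB]
  rw [h1]; ring
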